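/- arXiv:2002.07513 — 3 statements merged into one kernel-verified Lean document; each statement's English description precedes it below -/
import Mathlib

section
/- Let M ≥ 1. Let p₁, p₂ : ℝ^M → ℝ be continuously differentiable with compact support and let φ₁, φ₂ : ℝ^M → ℝ be twice continuously differentiable. Then ∫_{ℝ^M} [ div(p₁∇φ₁ − p₂∇φ₂)(x) · (φ₁(x) − φ₂(x)) + (1/2)(p₁(x) − p₂(x))(‖∇φ₁(x)‖² − ‖∇φ₂(x)‖²) ] dx = −(1/2) ∫_{ℝ^M} (p₁(x) + p₂(x)) ‖∇φ₁(x) − ∇φ₂(x)‖² dx. -/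
open MeasureTheory

/-- Divergence of a vector field on `ℝ^M`: the sum of the partial derivatives
of the coordinate functions. -/
noncomputable def ediv {M : ℕ} (F : EuclideanSpace ℝ (Fin M) → EuclideanSpace ℝ (Fin M))
    (x : EuclideanSpace ℝ (Fin M)) : ℝ :=
  ∑ i, fderiv ℝ F x (EuclideanSpace.single i 1) i

/-!
Write `ψ = φ₁ - φ₂` and `F = p₁ ∇φ₁ - p₂ ∇φ₂`. The product rule `div (ψ F) = ψ div F + ⟪∇ψ, F⟫`
together with the polarization-type identity
`⟪a - b, p a - q b⟫ = ½ (p - q)(‖a‖² - ‖b‖²) + ½ (p + q)‖a - b‖²`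
turns the integrand into `div (ψ F) - ½ (p₁ + p₂)‖∇φ₁ - ∇φ₂‖²`. Since `ψ F` is `C¹` with compact
support, its divergence integrates to zero (integration by parts against the constant `1`).
-/

theorem inner_sub_smul_sub_smul {V : Type*} [NormedAddCommGroup V] [InnerProductSpace ℝ V]
    (a b : V) (p q : ℝ) :
    inner ℝ (a - b) (p • a - q • b)
      = 1 / 2 * (p - q) * (‖a‖ ^ 2 - ‖b‖ ^ 2) + 1 / 2 * (p + q) * ‖a - b‖ ^ 2 := by
  rw [norm_sub_sq_real, inner_sub_left, inner_sub_right, inner_sub_right, real_inner_smul_right,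
    real_inner_smul_right, real_inner_smul_right, real_inner_smul_right,
    real_inner_self_eq_norm_sq, real_inner_self_eq_norm_sq, real_inner_comm b a]
  ring

section Gradient

variable {V : Type*} [NormedAddCommGroup V] [InnerProductSpace ℝ V] [CompleteSpace V]

theorem ContDiff.contDiff_gradient {n : WithTop ℕ∞} {φ : V → ℝ} (hφ : ContDiff ℝ (n + 1) φ) :
    ContDiff ℝ n (gradient φ) :=
  (InnerProductSpace.toDual ℝ V).symm.contDiff.comp (hφ.fderiv_right le_rfl)

theorem gradient_fun_sub {f g : V → ℝ} {x : V} (hf : DifferentiableAt ℝ f x)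
    (hg : DifferentiableAt ℝ g x) :
    gradient (fun y => f y - g y) x = gradient f x - gradient g x := by
  rw [gradient, fderiv_fun_sub hf hg, map_sub]
  rfl

end Gradient

theorem integral_fderiv_apply_eq_zero_of_integrable {V G : Type*} [NormedAddCommGroup V]
    [NormedSpace ℝ V] [FiniteDimensional ℝ V] [MeasurableSpace V] [BorelSpace V]
    [NormedAddCommGroup G] [NormedSpace ℝ G] {μ : Measure V} [μ.IsAddHaarMeasure]
    {g : V → G} {v : V} (hg' : Integrable (fun x => fderiv ℝ g x v) μ) (hg : Integrable g μ)
    (hd : Differentiable ℝ g) :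
    ∫ x, fderiv ℝ g x v ∂μ = 0 := by
  simpa using integral_smul_fderiv_eq_neg_fderiv_smul_of_integrable (f := fun _ => (1 : ℝ))
    (by simp) (by simpa using hg') (by simpa using hg) (fun x _ => differentiableAt_const _)
    (fun x _ => hd x)

section Divergence

variable {M : ℕ}

theorem ediv_fun_smul {ψ : EuclideanSpace ℝ (Fin M) → ℝ}
    {F : EuclideanSpace ℝ (Fin M) → EuclideanSpace ℝ (Fin M)} {x : EuclideanSpace ℝ (Fin M)}
    (hψ : DifferentiableAt ℝ ψ x) (hF : DifferentiableAt ℝ F x) :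
    ediv (fun y => ψ y • F y) x = ψ x * ediv F x + inner ℝ (gradient ψ x) (F x) := by
  simp only [ediv, fderiv_fun_smul hψ hF, add_apply, smul_apply,
    ContinuousLinearMap.smulRight_apply, PiLp.add_apply, PiLp.smul_apply, smul_eq_mul,
    ← inner_gradient_left, EuclideanSpace.inner_single_right,
    Finset.sum_add_distrib, Finset.mul_sum]
  rw [PiLp.inner_apply]
  simp [mul_comm]

theorem ContDiff.continuous_ediv {G : EuclideanSpace ℝ (Fin M) → EuclideanSpace ℝ (Fin M)}
    (hG : ContDiff ℝ 1 G) : Continuous (ediv G) :=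
  continuous_finsetSum _ fun i _ => (EuclideanSpace.proj (𝕜 := ℝ) i).continuous.comp
    ((hG.continuous_fderiv one_ne_zero).clm_apply continuous_const)

theorem HasCompactSupport.ediv {G : EuclideanSpace ℝ (Fin M) → EuclideanSpace ℝ (Fin M)}
    (hc : HasCompactSupport G) : HasCompactSupport (ediv G) :=
  (hc.fderiv ℝ).comp_left
    (g := fun L : EuclideanSpace ℝ (Fin M) →L[ℝ] EuclideanSpace ℝ (Fin M) =>
      ∑ i, L (EuclideanSpace.single i 1) i) (by simp)

theorem integral_ediv_eq_zero {G : EuclideanSpace ℝ (Fin M) → EuclideanSpace ℝ (Fin M)}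
    (hG : ContDiff ℝ 1 G) (hc : HasCompactSupport G) : ∫ x, ediv G x = 0 := by
  have hint (i : Fin M) : Integrable (fun x => fderiv ℝ G x (EuclideanSpace.single i 1)) :=
    ((hG.continuous_fderiv one_ne_zero).clm_apply continuous_const).integrable_of_hasCompactSupport
      (hc.fderiv_apply (𝕜 := ℝ) _)
  have hzero (i : Fin M) : ∫ x, fderiv ℝ G x (EuclideanSpace.single i 1) = 0 :=
    integral_fderiv_apply_eq_zero_of_integrable (hint i)
      (hG.continuous.integrable_of_hasCompactSupport hc) (hG.differentiable one_ne_zero)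
  have hcoord (i : Fin M) :
      Integrable (fun x => fderiv ℝ G x (EuclideanSpace.single i 1) i) :=
    (EuclideanSpace.proj (𝕜 := ℝ) i).integrable_comp (hint i)
  simp only [ediv]
  rw [integral_finsetSum _ fun i _ => hcoord i]
  refine Finset.sum_eq_zero fun i _ => ?_
  refine ((EuclideanSpace.proj (𝕜 := ℝ) i).integral_comp_comm (hint i)).trans ?_
  rw [hzero i, map_zero]

end Divergence

theorem stmt_1_general (M : ℕ)
    (p₁ p₂ φ₁ φ₂ : EuclideanSpace ℝ (Fin M) → ℝ)
    (hp₁ : ContDiff ℝ 1 p₁) (hp₂ : ContDiff ℝ 1 p₂)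
    (hp₁c : HasCompactSupport p₁) (hp₂c : HasCompactSupport p₂)
    (hφ₁ : ContDiff ℝ 2 φ₁) (hφ₂ : ContDiff ℝ 2 φ₂) :
    ∫ x, (ediv (fun y => p₁ y • gradient φ₁ y - p₂ y • gradient φ₂ y) x * (φ₁ x - φ₂ x)
        + (1 / 2) * (p₁ x - p₂ x) * (‖gradient φ₁ x‖ ^ 2 - ‖gradient φ₂ x‖ ^ 2))
      = -(1 / 2) * ∫ x, (p₁ x + p₂ x) * ‖gradient φ₁ x - gradient φ₂ x‖ ^ 2 := by
  set F := fun y => p₁ y • gradient φ₁ y - p₂ y • gradient φ₂ y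
  have hg₁ : ContDiff ℝ 1 (gradient φ₁) := hφ₁.contDiff_gradient
  have hg₂ : ContDiff ℝ 1 (gradient φ₂) := hφ₂.contDiff_gradient
  have hF : ContDiff ℝ 1 F := (hp₁.smul hg₁).sub (hp₂.smul hg₂)
  have hFc : HasCompactSupport F := hp₁c.smul_right.sub hp₂c.smul_right
  have hψ : ContDiff ℝ 1 (fun y => φ₁ y - φ₂ y) := (hφ₁.sub hφ₂).of_le one_le_two
  have hψF : ContDiff ℝ 1 (fun y => (φ₁ y - φ₂ y) • F y) := hψ.smul hF
  have hψFc : HasCompactSupport (fun y => (φ₁ y - φ₂ y) • F y) :=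
    hFc.smul_left (f := fun y => φ₁ y - φ₂ y)
  have hpointwise (x) : ediv F x * (φ₁ x - φ₂ x)
      + 1 / 2 * (p₁ x - p₂ x) * (‖gradient φ₁ x‖ ^ 2 - ‖gradient φ₂ x‖ ^ 2)
      = ediv (fun y => (φ₁ y - φ₂ y) • F y) x
        + -(1 / 2) * ((p₁ x + p₂ x) * ‖gradient φ₁ x - gradient φ₂ x‖ ^ 2) := by
    rw [ediv_fun_smul (hψ.differentiable one_ne_zero x) (hF.differentiable one_ne_zero x),
      gradient_fun_sub (hφ₁.differentiable two_ne_zero x) (hφ₂.differentiable two_ne_zero x),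
      inner_sub_smul_sub_smul]
    ring
  have hrest : Integrable fun x => (p₁ x + p₂ x) * ‖gradient φ₁ x - gradient φ₂ x‖ ^ 2 :=
    ((hp₁.continuous.add hp₂.continuous).mul
      ((hg₁.continuous.sub hg₂.continuous).norm.pow 2)).integrable_of_hasCompactSupport
      (hp₁c.add hp₂c).mul_right
  rw [integral_congr_ae (.of_forall hpointwise),
    integral_add (hψF.continuous_ediv.integrable_of_hasCompactSupport hψFc.ediv)
      (hrest.const_mul _),
    integral_ediv_eq_zero hψF hψFc, zero_add, integral_const_mul]

theorem stmt_1 (M : ℕ) (hM : 1 ≤ M)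
    (p₁ p₂ φ₁ φ₂ : EuclideanSpace ℝ (Fin M) → ℝ)
    (hp₁ : ContDiff ℝ 1 p₁) (hp₂ : ContDiff ℝ 1 p₂)
    (hp₁c : HasCompactSupport p₁) (hp₂c : HasCompactSupport p₂)
    (hφ₁ : ContDiff ℝ 2 φ₁) (hφ₂ : ContDiff ℝ 2 φ₂) :
    ∫ x, (ediv (fun y => p₁ y • gradient φ₁ y - p₂ y • gradient φ₂ y) x * (φ₁ x - φ₂ x)
        + (1 / 2) * (p₁ x - p₂ x) * (‖gradient φ₁ x‖ ^ 2 - ‖gradient φ₂ x‖ ^ 2))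
      = -(1 / 2) * ∫ x, (p₁ x + p₂ x) * ‖gradient φ₁ x - gradient φ₂ x‖ ^ 2 :=
  stmt_1_general M p₁ p₂ φ₁ φ₂ hp₁ hp₂ hp₁c hp₂c hφ₁ hφ₂
end

section
/- Let c ≥ 0, T > 0, let V : ℝ → ℝ be twice continuously differentiable, and let p : [0,1] × [0,T] → ℝ be twice continuously differentiable with p(x,t) > 0 everywhere. Assume p satisfies ∂ₜp = ∂ₓ((1 + c·p)∂ₓp + p·V') on [0,1] × (0,T), together with the no-flux boundary conditions (1 + c·p)∂ₓp + p·V' = 0 at x = 0 and at x = 1 for all t ∈ (0,T). Then for every t ∈ (0,T), the free energy E(t) = ∫₀¹ (p(x,t) log p(x,t) + (c/2) p(x,t)² + V(x) p(x,t)) dx is differentiable in t with E'(t) = −∫₀¹ p(x,t) (∂ₓ(log p + c·p + V)(x,t))² dx, and in particular E'(t) ≤ 0. -/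
/-!
Along the flow, `∂ₜ(p log p + c p²/2 + V p) = (μ + 1) ∂ₜp` with the chemical potential
`μ = log p + c p + V`, and the equation reads `∂ₜp = ∂ₓJ` with flux
`J = (1 + c p) ∂ₓp + p V' = p ∂ₓμ`.
Differentiating under the integral (legitimate since everything is continuous on a compact
neighbourhood) and integrating by parts against the no-flux boundary conditions `J = 0` gives
`E' = ∫ (μ + 1) ∂ₓJ = -∫ ∂ₓμ · J = -∫ p (∂ₓμ)² ≤ 0`.
-/

open MeasureTheory Set

namespace FokkerPlanck

theorem hasDerivAt_integral_of_continuousOn_deriv {F F' : ℝ → ℝ → ℝ} {a b t₀ ε : ℝ}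
    (hε : 0 < ε)
    (hF : ∀ τ ∈ Metric.closedBall t₀ ε, ContinuousOn (fun x => F x τ) (uIcc a b))
    (hF' : ContinuousOn (fun z : ℝ × ℝ => F' z.1 z.2) (uIcc a b ×ˢ Metric.closedBall t₀ ε))
    (hderiv : ∀ x ∈ uIcc a b, ∀ τ ∈ Metric.closedBall t₀ ε,
      HasDerivAt (fun τ => F x τ) (F' x τ) τ) :
    HasDerivAt (fun τ => ∫ x in a..b, F x τ) (∫ x in a..b, F' x t₀) t₀ := by
  have ht₀ : t₀ ∈ Metric.closedBall t₀ ε := Metric.mem_closedBall_self hε.le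
  have hF'_t₀ : ContinuousOn (fun x => F' x t₀) (uIcc a b) :=
    hF'.comp (f := fun x => (x, t₀)) (by fun_prop) fun x hx => ⟨hx, ht₀⟩
  obtain ⟨M, hM⟩ :=
    (isCompact_uIcc.prod (isCompact_closedBall t₀ ε)).exists_bound_of_continuousOn hF'
  refine (intervalIntegral.hasDerivAt_integral_of_dominated_loc_of_deriv_le
    (F := fun τ x => F x τ) (F' := fun τ x => F' x τ) (bound := fun _ => M)
    (Metric.closedBall_mem_nhds t₀ hε) ?_
    ((hF t₀ ht₀).intervalIntegrable)
    (hF'_t₀.mono uIoc_subset_uIcc |>.aestronglyMeasurable measurableSet_uIoc) ?_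
    intervalIntegrable_const ?_).2
  · filter_upwards [Metric.closedBall_mem_nhds t₀ hε] with τ hτ
    exact (hF τ hτ).mono uIoc_subset_uIcc |>.aestronglyMeasurable measurableSet_uIoc
  · exact Filter.Eventually.of_forall fun x hx τ hτ => hM (x, τ) ⟨uIoc_subset_uIcc hx, hτ⟩
  · exact Filter.Eventually.of_forall fun x hx τ hτ => hderiv x (uIoc_subset_uIcc hx) τ hτ

theorem continuous_deriv_snd_of_contDiff {p : ℝ → ℝ → ℝ}
    (hp : ContDiff ℝ 1 (fun z : ℝ × ℝ => p z.1 z.2)) :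
    Continuous fun z : ℝ × ℝ => deriv (p z.1) z.2 := by
  have hderiv (x τ : ℝ) :
      HasDerivAt (p x) (fderiv ℝ (fun z : ℝ × ℝ => p z.1 z.2) (x, τ) (0, 1)) τ :=
    (hp.differentiable one_ne_zero (x, τ)).hasFDerivAt.comp_hasDerivAt τ
      ((hasDerivAt_const τ x).prodMk (hasDerivAt_id τ))
  simp only [fun x τ => (hderiv x τ).deriv]
  exact (hp.continuous_fderiv one_ne_zero).clm_apply continuous_const

noncomputable section

def freeEnergyDensity (c v s : ℝ) : ℝ := s * Real.log s + c / 2 * s ^ 2 + v * s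

def chemicalPotential (c : ℝ) (V u : ℝ → ℝ) (x : ℝ) : ℝ := Real.log (u x) + c * u x + V x

def flux (c : ℝ) (V u : ℝ → ℝ) (x : ℝ) : ℝ := (1 + c * u x) * deriv u x + u x * deriv V x

end

theorem hasDerivAt_freeEnergyDensity (c v : ℝ) {s : ℝ} (hs : s ≠ 0) :
    HasDerivAt (freeEnergyDensity c v) (Real.log s + c * s + v + 1) s := by
  have hid := hasDerivAt_id' s
  refine (((hid.mul (hid.log hs)).add ((hid.pow 2).const_mul (c / 2))).add
    (hid.const_mul v)).congr_deriv ?_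
  field_simp
  ring

theorem hasDerivAt_integral_freeEnergyDensity {c a b t₀ ε : ℝ} {V : ℝ → ℝ} {p : ℝ → ℝ → ℝ}
    (hV : Continuous V) (hp : ContDiff ℝ 1 (fun z : ℝ × ℝ => p z.1 z.2)) (hε : 0 < ε)
    (hpos : ∀ x ∈ uIcc a b, ∀ τ ∈ Metric.closedBall t₀ ε, 0 < p x τ) :
    HasDerivAt (fun τ => ∫ x in a..b, freeEnergyDensity c (V x) (p x τ))
      (∫ x in a..b, (chemicalPotential c V (fun y => p y t₀) x + 1) * deriv (p x) t₀) t₀ := by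
  have hpcont : Continuous fun z : ℝ × ℝ => p z.1 z.2 := hp.continuous
  have hpt : Continuous fun z : ℝ × ℝ => deriv (p z.1) z.2 := continuous_deriv_snd_of_contDiff hp
  refine hasDerivAt_integral_of_continuousOn_deriv
    (F' := fun x τ => (chemicalPotential c V (fun y => p y τ) x + 1) * deriv (p x) τ) hε ?_ ?_ ?_
  · intro τ hτ
    have hlog : ContinuousOn (fun x => Real.log (p x τ)) (uIcc a b) :=
      (hpcont.comp (by fun_prop : Continuous fun x : ℝ => (x, τ))).continuousOn.log
        fun x hx => (hpos x hx τ hτ).ne'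
    unfold freeEnergyDensity
    fun_prop
  · have hlog : ContinuousOn (fun z : ℝ × ℝ => Real.log (p z.1 z.2))
        (uIcc a b ×ˢ Metric.closedBall t₀ ε) :=
      hpcont.continuousOn.log fun z hz => (hpos z.1 hz.1 z.2 hz.2).ne'
    exact (((hlog.add (continuous_const.mul hpcont).continuousOn).add
      (hV.comp continuous_fst).continuousOn).add continuousOn_const).mul hpt.continuousOn
  · intro x hx τ hτ
    have hpx : Differentiable ℝ (p x) :=
      (hp.comp (contDiff_const.prodMk contDiff_id)).differentiable one_ne_zero
    exact (hasDerivAt_freeEnergyDensity c (V x) (hpos x hx τ hτ).ne').comp τ (hpx τ).hasDerivAt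

section Flux

variable {c : ℝ} {V u : ℝ → ℝ}

theorem hasDerivAt_chemicalPotential {x : ℝ} (hu : DifferentiableAt ℝ u x)
    (hV : DifferentiableAt ℝ V x) (hx : u x ≠ 0) :
    HasDerivAt (chemicalPotential c V u) (deriv u x / u x + c * deriv u x + deriv V x) x :=
  ((hu.hasDerivAt.log hx).add (hu.hasDerivAt.const_mul c)).add hV.hasDerivAt

theorem flux_eq_mul_deriv_chemicalPotential {x : ℝ} (hu : DifferentiableAt ℝ u x)
    (hV : DifferentiableAt ℝ V x) (hx : u x ≠ 0) :
    flux c V u x = u x * deriv (chemicalPotential c V u) x := by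
  rw [(hasDerivAt_chemicalPotential hu hV hx).deriv, flux]
  field_simp

theorem contDiff_flux (hu : ContDiff ℝ 2 u) (hV : ContDiff ℝ 2 V) :
    ContDiff ℝ 1 (flux c V u) := by
  have hu' : ContDiff ℝ 1 (deriv u) := (contDiff_succ_iff_deriv.mp hu).2.2
  have hV' : ContDiff ℝ 1 (deriv V) := (contDiff_succ_iff_deriv.mp hV).2.2
  have hu1 : ContDiff ℝ 1 u := hu.of_le one_le_two
  exact ((contDiff_const.add (contDiff_const.mul hu1)).mul hu').add (hu1.mul hV')

theorem integral_chemicalPotential_mul_deriv_flux {a b : ℝ} (hu : ContDiff ℝ 2 u)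
    (hV : ContDiff ℝ 2 V) (hpos : ∀ x ∈ uIcc a b, 0 < u x)
    (ha : flux c V u a = 0) (hb : flux c V u b = 0) :
    ∫ x in a..b, (chemicalPotential c V u x + 1) * deriv (flux c V u) x
      = -∫ x in a..b, u x * deriv (chemicalPotential c V u) x ^ 2 := by
  have hud : Differentiable ℝ u := hu.differentiable two_ne_zero
  have hVd : Differentiable ℝ V := hV.differentiable two_ne_zero
  have hJ : ContDiff ℝ 1 (flux c V u) := contDiff_flux hu hV
  have hμ (x) (hx : x ∈ uIcc a b) :=
    hasDerivAt_chemicalPotential (c := c) (hud x) (hVd x) (hpos x hx).ne'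
  have hμ'_cont : ContinuousOn (deriv (chemicalPotential c V u)) (uIcc a b) := by
    have hu' : Continuous (deriv u) := hu.continuous_deriv one_le_two
    have hV' : Continuous (deriv V) := hV.continuous_deriv one_le_two
    refine ContinuousOn.congr ?_ fun x hx => (hμ x hx).deriv
    exact ((hu'.continuousOn.div hu.continuous.continuousOn fun x hx => (hpos x hx).ne').add
      (continuous_const.mul hu').continuousOn).add hV'.continuousOn
  rw [intervalIntegral.integral_mul_deriv_eq_deriv_mul
      (fun x hx => ((hμ x hx).differentiableAt.hasDerivAt).add_const 1)
      (fun x _ => (hJ.differentiable one_ne_zero x).hasDerivAt)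
      (hμ'_cont.intervalIntegrable) ((hJ.continuous_deriv le_rfl).intervalIntegrable a b),
    ha, hb, mul_zero, mul_zero, sub_zero, zero_sub]
  congr 1
  refine intervalIntegral.integral_congr fun x hx => ?_
  simp only [flux_eq_mul_deriv_chemicalPotential (hud x) (hVd x) (hpos x hx).ne']
  ring

end Flux

end FokkerPlanck

open FokkerPlanck

theorem stmt_6_general (c T : ℝ)
    (V : ℝ → ℝ) (hV : ContDiff ℝ 2 V)
    (p : ℝ → ℝ → ℝ)
    (hp : ContDiff ℝ 2 (fun z : ℝ × ℝ => p z.1 z.2))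
    (hppos : ∀ x ∈ Icc (0:ℝ) 1, ∀ t ∈ Icc (0:ℝ) T, 0 < p x t)
    (hpde : ∀ x ∈ Icc (0:ℝ) 1, ∀ t ∈ Ioo (0:ℝ) T,
      deriv (p x) t
        = deriv (fun y => (1 + c * p y t) * deriv (fun z => p z t) y + p y t * deriv V y) x)
    (hbc0 : ∀ t ∈ Ioo (0:ℝ) T,
      (1 + c * p 0 t) * deriv (fun z => p z t) 0 + p 0 t * deriv V 0 = 0)
    (hbc1 : ∀ t ∈ Ioo (0:ℝ) T,
      (1 + c * p 1 t) * deriv (fun z => p z t) 1 + p 1 t * deriv V 1 = 0) :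
    ∀ t ∈ Ioo (0:ℝ) T,
      HasDerivAt (fun τ => ∫ x in (0:ℝ)..1,
          (p x τ * Real.log (p x τ) + c / 2 * p x τ ^ 2 + V x * p x τ))
        (-∫ x in (0:ℝ)..1,
          p x t * (deriv (fun y => Real.log (p y t) + c * p y t + V y) x) ^ 2) t
      ∧ (-∫ x in (0:ℝ)..1,
          p x t * (deriv (fun y => Real.log (p y t) + c * p y t + V y) x) ^ 2) ≤ 0 := by
  intro t ht
  obtain ⟨ε, hε, hball⟩ : ∃ ε > 0, Metric.closedBall t ε ⊆ Ioo 0 T :=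
    Metric.nhds_basis_closedBall.mem_iff.mp (isOpen_Ioo.mem_nhds ht)
  have hI : uIcc (0:ℝ) 1 = Icc 0 1 := uIcc_of_le zero_le_one
  have hpos : ∀ x ∈ uIcc (0:ℝ) 1, 0 < p x t :=
    fun x hx => hppos x (hI ▸ hx) t (Ioo_subset_Icc_self ht)
  have hE := hasDerivAt_integral_freeEnergyDensity (c := c) hV.continuous (hp.of_le one_le_two) hε
    fun x hx τ hτ => hppos x (hI ▸ hx) τ (Ioo_subset_Icc_self (hball hτ))
  have hpde_t : ∫ x in (0:ℝ)..1, (chemicalPotential c V (fun y => p y t) x + 1) * deriv (p x) t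
      = ∫ x in (0:ℝ)..1,
          (chemicalPotential c V (fun y => p y t) x + 1) * deriv (flux c V fun y => p y t) x :=
    intervalIntegral.integral_congr fun x hx => by rw [hpde x (hI ▸ hx) t ht]; rfl
  have hpt : ContDiff ℝ 2 fun y => p y t := hp.comp (contDiff_id.prodMk contDiff_const)
  rw [hpde_t, integral_chemicalPotential_mul_deriv_flux hpt hV hpos (hbc0 t ht) (hbc1 t ht)] at hE
  exact ⟨hE, neg_nonpos.mpr (intervalIntegral.integral_nonneg zero_le_one
    fun x hx => mul_nonneg (hpos x (hI ▸ hx)).le (sq_nonneg _))⟩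

theorem stmt_6 (c T : ℝ) (hc : 0 ≤ c) (hT : 0 < T)
    (V : ℝ → ℝ) (hV : ContDiff ℝ 2 V)
    (p : ℝ → ℝ → ℝ)
    (hp : ContDiff ℝ 2 (fun z : ℝ × ℝ => p z.1 z.2))
    (hppos : ∀ x ∈ Icc (0:ℝ) 1, ∀ t ∈ Icc (0:ℝ) T, 0 < p x t)
    (hpde : ∀ x ∈ Icc (0:ℝ) 1, ∀ t ∈ Ioo (0:ℝ) T,
      deriv (p x) t
        = deriv (fun y => (1 + c * p y t) * deriv (fun z => p z t) y + p y t * deriv V y) x)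
    (hbc0 : ∀ t ∈ Ioo (0:ℝ) T,
      (1 + c * p 0 t) * deriv (fun z => p z t) 0 + p 0 t * deriv V 0 = 0)
    (hbc1 : ∀ t ∈ Ioo (0:ℝ) T,
      (1 + c * p 1 t) * deriv (fun z => p z t) 1 + p 1 t * deriv V 1 = 0) :
    ∀ t ∈ Ioo (0:ℝ) T,
      HasDerivAt (fun τ => ∫ x in (0:ℝ)..1,
          (p x τ * Real.log (p x τ) + c / 2 * p x τ ^ 2 + V x * p x τ))
        (-∫ x in (0:ℝ)..1,
          p x t * (deriv (fun y => Real.log (p y t) + c * p y t + V y) x) ^ 2) t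
      ∧ (-∫ x in (0:ℝ)..1,
          p x t * (deriv (fun y => Real.log (p y t) + c * p y t + V y) x) ^ 2) ≤ 0 :=
  stmt_6_general c T V hV p hp hppos hpde hbc0 hbc1
end

section
/- Let d ≥ 1 and let φ : ℝ^d × ℝ → ℝ be twice continuously differentiable and satisfy the Hamilton–Jacobi equation ∂ₛφ(y,s) + (1/2)‖∇_y φ(y,s)‖² = 0 at every (y,s). For ε ∈ ℝ define Φ̃ : ℝ^d × ℝ^d × ℝ → ℝ by Φ̃(x₁, x, s) = 2φ(x₁,s) + ε⟨x, ∇_{x₁}φ(x₁,s)⟩. Then at every (x₁, x, s): ε² ∂ₛΦ̃ + (ε²/2)‖∇_{x₁}Φ̃‖² − ε⟨∇_{x₁}Φ̃, ∇_xΦ̃⟩ + ‖∇_xΦ̃‖² = (ε⁴/2)‖H_φ(x₁,s) x‖², where H_φ(x₁,s) denotes the spatial Hessian of φ(·,s) at x₁ (so H_φ(x₁,s)x is the Hessian applied to x). -/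
/-!
With `p = ∇φ(x₁,s)` and `H` the spatial Hessian at `(x₁,s)`, the three derivatives of the ansatz
are `∇ₓΦ̃ = ε p`, `∇_{x₁}Φ̃ = 2p + ε H x` (using the symmetry of `H`) and
`∂ₛΦ̃ = 2 ∂ₛφ + ε ⟨x, ∂ₛ∇φ⟩`. The Hamilton–Jacobi equation gives `∂ₛφ = -‖p‖²/2`, and
differentiating it in space, together with the symmetry of the mixed second derivatives of `φ`,
gives `⟨x, ∂ₛ∇φ⟩ = -⟨p, H x⟩`. Substituting, the residual is a polynomial in `ε` whose
`ε²` and `ε³` coefficients cancel, leaving `ε⁴ ‖H x‖² / 2`.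
-/

open scoped RealInnerProductSpace
open InnerProductSpace

theorem inner_ansatz_residual {E : Type*} [NormedAddCommGroup E] [InnerProductSpace ℝ E]
    (ε : ℝ) (p h : E) :
    ε ^ 2 * (2 * (-(1 / 2) * ‖p‖ ^ 2) + ε * -⟪p, h⟫) + ε ^ 2 / 2 * ‖(2 : ℝ) • p + ε • h‖ ^ 2
      - ε * ⟪(2 : ℝ) • p + ε • h, ε • p⟫ + ‖ε • p‖ ^ 2 = ε ^ 4 / 2 * ‖h‖ ^ 2 := by
  simp only [← real_inner_self_eq_norm_sq, inner_add_left, inner_add_right, real_inner_smul_left,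
    real_inner_smul_right, real_inner_comm p h]
  ring

section Slices

variable {E X : Type*} [NormedAddCommGroup E] [NormedSpace ℝ E]
  [NormedAddCommGroup X] [NormedSpace ℝ X] {y : E} {t : ℝ}

theorem HasFDerivAt.slice_left {G : E × ℝ → X} {G' : E × ℝ →L[ℝ] X}
    (hG : HasFDerivAt G G' (y, t)) :
    HasFDerivAt (fun z => G (z, t)) (G'.comp (.inl ℝ E ℝ)) y :=
  hG.comp y (hasFDerivAt_prodMk_left y t)

theorem HasFDerivAt.slice_right {G : E × ℝ → X} {G' : E × ℝ →L[ℝ] X}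
    (hG : HasFDerivAt G G' (y, t)) :
    HasDerivAt (fun s => G (y, s)) (G' (0, 1)) t :=
  hG.comp_hasDerivAt t ((hasDerivAt_const t y).prodMk (hasDerivAt_id t))

variable {φ : E → ℝ → ℝ} {n : WithTop ℕ∞}

theorem ContDiff.slice_left (hφ : ContDiff ℝ n (Function.uncurry φ)) (t : ℝ) :
    ContDiff ℝ n (fun z => φ z t) :=
  hφ.comp (contDiff_id.prodMk contDiff_const)

theorem ContDiff.slice_right (hφ : ContDiff ℝ n (Function.uncurry φ)) (y : E) :
    ContDiff ℝ n (φ y) :=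
  hφ.comp (contDiff_const.prodMk contDiff_id)

theorem deriv_eq_fderiv_uncurry (hφ : DifferentiableAt ℝ (Function.uncurry φ) (y, t)) :
    deriv (φ y) t = fderiv ℝ (Function.uncurry φ) (y, t) (0, 1) :=
  hφ.hasFDerivAt.slice_right.deriv

end Slices

section Gradient

variable {E : Type*} [NormedAddCommGroup E] [InnerProductSpace ℝ E] [CompleteSpace E]
  {f g : E → ℝ} {f' g' x : E}

theorem HasGradientAt.add (hf : HasGradientAt f f' x) (hg : HasGradientAt g g' x) :
    HasGradientAt (fun z => f z + g z) (f' + g') x := by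
  rw [hasGradientAt_iff_hasFDerivAt, map_add]
  exact HasFDerivAt.add hf hg

theorem HasGradientAt.const_add (hf : HasGradientAt f f' x) (c : ℝ) :
    HasGradientAt (fun z => c + f z) f' x :=
  HasFDerivAt.const_add c hf

theorem HasGradientAt.const_mul (hf : HasGradientAt f f' x) (c : ℝ) :
    HasGradientAt (fun z => c * f z) (c • f') x := by
  rw [hasGradientAt_iff_hasFDerivAt, map_smulₛₗ, conj_trivial]
  exact HasFDerivAt.const_mul hf c

theorem hasGradientAt_inner_left (v x : E) : HasGradientAt (fun z => ⟪z, v⟫) v x := by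
  simp_rw [real_inner_comm v]
  exact (innerSL ℝ v).hasFDerivAt

theorem ContDiff.gradient {n m : WithTop ℕ∞} (hf : ContDiff ℝ n f) (hmn : m + 1 ≤ n) :
    ContDiff ℝ m (gradient f) :=
  (toDual ℝ E).symm.toLinearIsometry.toContinuousLinearMap.contDiff.comp (hf.fderiv_right hmn)

theorem inner_fderiv_gradient_apply (hf : ContDiff ℝ 2 f) (x v w : E) :
    ⟪fderiv ℝ (gradient f) x v, w⟫ = fderiv ℝ (fderiv ℝ f) x v w := by
  have hD : HasFDerivAt (fderiv ℝ f) (fderiv ℝ (fderiv ℝ f) x) x :=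
    ((hf.fderiv_right le_rfl).differentiable one_ne_zero x).hasFDerivAt
  have hG : HasFDerivAt (gradient f)
      ((toDual ℝ E).symm.toLinearIsometry.toContinuousLinearMap.comp (fderiv ℝ (fderiv ℝ f) x)) x :=
    (toDual ℝ E).symm.toLinearIsometry.toContinuousLinearMap.hasFDerivAt.comp x hD
  rw [hG.fderiv]
  simp [toDual_symm_apply]

theorem fderiv_gradient_isSymmetric (hf : ContDiff ℝ 2 f) (x : E) :
    (fderiv ℝ (gradient f) x : E →ₗ[ℝ] E).IsSymmetric := by
  intro v w
  simp only [ContinuousLinearMap.coe_coe]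
  rw [real_inner_comm _ v, inner_fderiv_gradient_apply hf, inner_fderiv_gradient_apply hf,
    hf.contDiffAt.isSymmSndFDerivAt (by simp)]

theorem hasGradientAt_inner_gradient (hf : ContDiff ℝ 2 f) (v x : E) :
    HasGradientAt (fun z => ⟪v, gradient f z⟫) (fderiv ℝ (gradient f) x v) x := by
  have hG : HasFDerivAt (gradient f) (fderiv ℝ (gradient f) x) x :=
    ((hf.gradient le_rfl).differentiable one_ne_zero x).hasFDerivAt
  refine ((innerSL ℝ v).hasFDerivAt.comp x hG).congr_fderiv ?_
  ext w
  simpa using (fderiv_gradient_isSymmetric hf x v w).symm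

variable {φ : E → ℝ → ℝ} {y : E} {t : ℝ}

theorem inner_gradient_eq_fderiv_uncurry (hφ : DifferentiableAt ℝ (Function.uncurry φ) (y, t))
    (v : E) :
    ⟪v, gradient (fun z => φ z t) y⟫ = fderiv ℝ (Function.uncurry φ) (y, t) (v, 0) := by
  have h : HasFDerivAt (fun z => φ z t) _ y := hφ.hasFDerivAt.slice_left
  rw [inner_gradient_right, h.fderiv]
  simp

-- Both derivatives are entries of the second derivative of `uncurry φ` at `(y, s)`, which is
-- symmetric (Schwarz).
theorem hasDerivAt_inner_gradient_fderiv_deriv (hφ : ContDiff ℝ 2 (Function.uncurry φ))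
    (y v : E) (s : ℝ) :
    HasDerivAt (fun t => ⟪v, gradient (fun z => φ z t) y⟫)
      (fderiv ℝ (fun y => deriv (φ y) s) y v) s := by
  have hdiff := hφ.differentiable two_ne_zero
  set B := fderiv ℝ (fderiv ℝ (Function.uncurry φ)) (y, s)
  have hD (w : E × ℝ) : HasFDerivAt (fun q => fderiv ℝ (Function.uncurry φ) q w)
      ((ContinuousLinearMap.apply ℝ ℝ w).comp B) (y, s) :=
    (ContinuousLinearMap.apply ℝ ℝ w).hasFDerivAt.comp _
      ((hφ.fderiv_right le_rfl).differentiable one_ne_zero _).hasFDerivAt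
  have hspace : (fun y => deriv (φ y) s)
      = fun z => fderiv ℝ (Function.uncurry φ) (z, s) (0, 1) :=
    funext fun z => deriv_eq_fderiv_uncurry (hdiff _)
  have hinner : (fun t => ⟪v, gradient (fun z => φ z t) y⟫)
      = fun t => fderiv ℝ (Function.uncurry φ) (y, t) (v, 0) :=
    funext fun t => inner_gradient_eq_fderiv_uncurry (hdiff _) v
  rw [hinner, hspace, (hD (0, 1)).slice_left.fderiv]
  refine (hD (v, 0)).slice_right.congr_deriv ?_
  simpa using hφ.contDiffAt.isSymmSndFDerivAt (by simp) (0, 1) (v, 0)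

theorem fderiv_deriv_eq_neg_inner_of_hamiltonJacobi (hφ : ContDiff ℝ 2 (Function.uncurry φ))
    (hHJ : ∀ y, deriv (φ y) t + 1 / 2 * ‖gradient (fun z => φ z t) y‖ ^ 2 = 0) (y v : E) :
    fderiv ℝ (fun y => deriv (φ y) t) y v
      = -⟪gradient (fun z => φ z t) y, fderiv ℝ (gradient fun z => φ z t) y v⟫ := by
  have hG : HasFDerivAt (gradient fun z => φ z t) (fderiv ℝ (gradient fun z => φ z t) y) y :=
    (((hφ.slice_left t).gradient le_rfl).differentiable one_ne_zero y).hasFDerivAt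
  have hHJ' : (fun y => deriv (φ y) t) = fun y => -(1 / 2) * ‖gradient (fun z => φ z t) y‖ ^ 2 :=
    funext fun y => by linarith [hHJ y]
  rw [hHJ', (hG.norm_sq.const_mul _).fderiv]
  simp

end Gradient

theorem stmt_14_general (d : ℕ) (ε : ℝ)
    (φ : EuclideanSpace ℝ (Fin d) → ℝ → ℝ)
    (hφ : ContDiff ℝ 2 (fun z : EuclideanSpace ℝ (Fin d) × ℝ => φ z.1 z.2))
    (hHJ : ∀ y : EuclideanSpace ℝ (Fin d), ∀ s : ℝ,
      deriv (φ y) s + (1 / 2) * ‖gradient (fun z => φ z s) y‖ ^ 2 = 0) :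
    ∀ (x₁ x : EuclideanSpace ℝ (Fin d)) (s : ℝ),
      ε ^ 2 * deriv (fun s' => 2 * φ x₁ s' + ε * ⟪x, gradient (fun z => φ z s') x₁⟫) s
      + ε ^ 2 / 2 *
          ‖gradient (fun z => 2 * φ z s + ε * ⟪x, gradient (fun w => φ w s) z⟫) x₁‖ ^ 2
      - ε * ⟪gradient (fun z => 2 * φ z s + ε * ⟪x, gradient (fun w => φ w s) z⟫) x₁,
             gradient (fun z => 2 * φ x₁ s + ε * ⟪z, gradient (fun w => φ w s) x₁⟫) x⟫
      + ‖gradient (fun z => 2 * φ x₁ s + ε * ⟪z, gradient (fun w => φ w s) x₁⟫) x‖ ^ 2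
      = ε ^ 4 / 2 * ‖fderiv ℝ (fun z => gradient (fun w => φ w s) z) x₁ x‖ ^ 2 := by
  intro x₁ x s
  have hf : ContDiff ℝ 2 (fun z => φ z s) := hφ.slice_left s
  set p := gradient (fun w => φ w s) x₁
  set H := fderiv ℝ (gradient fun w => φ w s) x₁
  have hgrad₁ : gradient (fun z => 2 * φ z s + ε * ⟪x, gradient (fun w => φ w s) z⟫) x₁
      = (2 : ℝ) • p + ε • H x :=
    ((((hf.differentiable two_ne_zero) x₁).hasGradientAt.const_mul 2).add
      ((hasGradientAt_inner_gradient hf x x₁).const_mul ε)).gradient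
  have hgrad₂ : gradient (fun z => 2 * φ x₁ s + ε * ⟪z, p⟫) x = ε • p :=
    (((hasGradientAt_inner_left p x).const_mul ε).const_add _).gradient
  have hmixed : HasDerivAt (fun t => ⟪x, gradient (fun z => φ z t) x₁⟫) (-⟪p, H x⟫) s := by
    rw [← fderiv_deriv_eq_neg_inner_of_hamiltonJacobi hφ (hHJ · s)]
    exact hasDerivAt_inner_gradient_fderiv_deriv hφ x₁ x s
  have htime : deriv (fun s' => 2 * φ x₁ s' + ε * ⟪x, gradient (fun z => φ z s') x₁⟫) s
      = 2 * (-(1 / 2) * ‖p‖ ^ 2) + ε * -⟪p, H x⟫ := by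
    rw [(((((hφ.slice_right x₁).differentiable two_ne_zero) s).hasDerivAt.const_mul 2).fun_add
      (hmixed.const_mul ε)).deriv]
    linarith [hHJ x₁ s]
  rw [htime, hgrad₁, hgrad₂]
  exact inner_ansatz_residual ε p (H x)

theorem stmt_14 (d : ℕ) (hd : 1 ≤ d) (ε : ℝ)
    (φ : EuclideanSpace ℝ (Fin d) → ℝ → ℝ)
    (hφ : ContDiff ℝ 2 (fun z : EuclideanSpace ℝ (Fin d) × ℝ => φ z.1 z.2))
    (hHJ : ∀ y : EuclideanSpace ℝ (Fin d), ∀ s : ℝ,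
      deriv (φ y) s + (1 / 2) * ‖gradient (fun z => φ z s) y‖ ^ 2 = 0) :
    ∀ (x₁ x : EuclideanSpace ℝ (Fin d)) (s : ℝ),
      ε ^ 2 * deriv (fun s' => 2 * φ x₁ s' + ε * ⟪x, gradient (fun z => φ z s') x₁⟫) s
      + ε ^ 2 / 2 *
          ‖gradient (fun z => 2 * φ z s + ε * ⟪x, gradient (fun w => φ w s) z⟫) x₁‖ ^ 2
      - ε * ⟪gradient (fun z => 2 * φ z s + ε * ⟪x, gradient (fun w => φ w s) z⟫) x₁,
             gradient (fun z => 2 * φ x₁ s + ε * ⟪z, gradient (fun w => φ w s) x₁⟫) x⟫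
      + ‖gradient (fun z => 2 * φ x₁ s + ε * ⟪z, gradient (fun w => φ w s) x₁⟫) x‖ ^ 2
      = ε ^ 4 / 2 * ‖fderiv ℝ (fun z => gradient (fun w => φ w s) z) x₁ x‖ ^ 2 :=
  stmt_14_general d ε φ hφ hHJ
end
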